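/- The quotient space X = W/s depends only on M, A and k, and not on the choice of k-fold covering evenly covering a neighborhood of A: under the stated hypotheses there is a homeomorphism from W/s onto W'/s'. -/
import Mathlib

def coverRel {W M : Type*} (p : W → M) (A : Set M) (w w' : W) : Prop :=
  w = w' ∨ (p w = p w' ∧ p w ∉ A)

/-- Data of a trivialization of `p` over an open neighborhood of `A`. -/
structure TrivData {W M : Type*} [TopologicalSpace W] [TopologicalSpace M]
    (A : Set M) (k : ℕ) (p : W → M) where
  U : Set M
  hUopen : IsOpen U
  hAU : A ⊆ U
  Ui : Fin k → Set W
  hUiopen : ∀ i, IsOpen (Ui i)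
  hUidisj : Pairwise (Function.onFun Disjoint Ui)
  hUiunion : ⋃ i, Ui i = p ⁻¹' U
  e : ∀ i, (Ui i) ≃ₜ U
  he : ∀ i (w : Ui i), ((e i) w : M) = p (w : W)

namespace TrivData

variable {W W' M : Type*} [TopologicalSpace W] [TopologicalSpace W'] [TopologicalSpace M]
  {A : Set M} {k : ℕ} {p : W → M} {p' : W' → M}

lemma mem_iUnion_of_mem (D : TrivData A k p) {w : W} (h : p w ∈ A) : ∃ i, w ∈ D.Ui i := by
  have : w ∈ ⋃ i, D.Ui i := by rw [D.hUiunion]; exact D.hAU h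
  exact Set.mem_iUnion.mp this

lemma p_symm (D : TrivData A k p) (i : Fin k) (x : D.U) :
    p (((D.e i).symm x : D.Ui i) : W) = x := by
  rw [← D.he i ((D.e i).symm x), (D.e i).apply_symm_apply]

/-- The section of the trivialization over index `i`. -/
def sec (D : TrivData A k p) (i : Fin k) (x : D.U) : W := ((D.e i).symm x : W)

lemma p_sec (D : TrivData A k p) (i : Fin k) (x : D.U) : p (D.sec i x) = x :=
  D.p_symm i x

lemma sec_mem (D : TrivData A k p) (i : Fin k) (x : D.U) : D.sec i x ∈ D.Ui i :=
  Subtype.coe_prop _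

lemma sec_apply (D : TrivData A k p) (i : Fin k) {w : W} (hw : w ∈ D.Ui i)
    (x : D.U) (hx : (x : M) = p w) : D.sec i x = w := by
  have : x = (D.e i) ⟨w, hw⟩ := Subtype.ext (by rw [hx, D.he i ⟨w, hw⟩])
  rw [sec, this, (D.e i).symm_apply_apply]

open Classical in
noncomputable def cmap (hs' : Function.Surjective p')
    (D : TrivData A k p) (D' : TrivData A k p') : W → W' := fun w =>
  if h : p w ∈ A then
    D'.sec (D.mem_iUnion_of_mem h).choose ⟨p w, D'.hAU h⟩
  else (hs' (p w)).choose

lemma p'_cmap (hs' : Function.Surjective p') (D : TrivData A k p) (D' : TrivData A k p')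
    (w : W) : p' (cmap hs' D D' w) = p w := by
  unfold cmap
  split
  · exact D'.p_sec _ _
  · exact (hs' (p w)).choose_spec

lemma cmap_eq_of_mem (hs' : Function.Surjective p') (D : TrivData A k p)
    (D' : TrivData A k p') {w : W} (h : p w ∈ A) (i : Fin k) (hi : w ∈ D.Ui i) :
    cmap hs' D D' w = D'.sec i ⟨p w, D'.hAU h⟩ := by
  have hj := (D.mem_iUnion_of_mem h).choose_spec
  have heq : (D.mem_iUnion_of_mem h).choose = i := by
    by_contra hne
    exact Set.disjoint_left.mp (D.hUidisj hne) hj hi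
  unfold cmap
  rw [dif_pos h, heq]

lemma cmap_mem (hs' : Function.Surjective p') (D : TrivData A k p)
    (D' : TrivData A k p') {w : W} (h : p w ∈ A) (i : Fin k) (hi : w ∈ D.Ui i) :
    cmap hs' D D' w ∈ D'.Ui i := by
  rw [cmap_eq_of_mem hs' D D' h i hi]
  exact D'.sec_mem i _

lemma cmap_quot_eq (hs' : Function.Surjective p') (D : TrivData A k p)
    (D' : TrivData A k p') (w₁ w₂ : W) (h : coverRel p A w₁ w₂) :
    Quot.mk (coverRel p' A) (cmap hs' D D' w₁) = Quot.mk (coverRel p' A) (cmap hs' D D' w₂) := by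
  rcases h with rfl | ⟨hpe, hpa⟩
  · rfl
  · refine Quot.sound (Or.inr ⟨?_, ?_⟩)
    · rw [p'_cmap hs' D D' w₁, p'_cmap hs' D D' w₂]; exact hpe
    · rw [p'_cmap hs' D D' w₁]; exact hpa

lemma cmap_cmap (hs : Function.Surjective p) (hs' : Function.Surjective p')
    (D : TrivData A k p) (D' : TrivData A k p') (w : W) :
    coverRel p A (cmap hs D' D (cmap hs' D D' w)) w := by
  by_cases h : p w ∈ A
  · obtain ⟨i, hi⟩ := D.mem_iUnion_of_mem h
    have hmem : cmap hs' D D' w ∈ D'.Ui i := cmap_mem hs' D D' h i hi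
    have hpval : p' (cmap hs' D D' w) = p w := p'_cmap hs' D D' w
    have h' : p' (cmap hs' D D' w) ∈ A := by rw [hpval]; exact h
    left
    rw [cmap_eq_of_mem hs D' D h' i hmem]
    exact D.sec_apply i hi _ hpval
  · right
    have h1 : p' (cmap hs' D D' w) = p w := p'_cmap hs' D D' w
    have h2 : p (cmap hs D' D (cmap hs' D D' w)) = p w := by
      rw [p'_cmap hs D' D (cmap hs' D D' w), h1]
    exact ⟨h2, by rw [h2]; exact h⟩

lemma continuous_quot_cmap (hA : IsClosed A) (hp : Continuous p) (hp'c : Continuous p')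
    (hp'o : IsOpenMap p') (hs' : Function.Surjective p')
    (D : TrivData A k p) (D' : TrivData A k p') :
    Continuous (fun w => Quot.mk (coverRel p' A) (cmap hs' D D' w)) := by
  set q' : W' → Quot (coverRel p' A) := Quot.mk (coverRel p' A) with hq'
  rw [continuous_def]
  intro V hV
  have hqV : IsOpen (q' ⁻¹' V) := isQuotientMap_quot_mk.isOpen_preimage.mpr hV
  rw [isOpen_iff_mem_nhds]
  intro w hw
  by_cases h : p w ∈ A
  · obtain ⟨i, hi⟩ := D.mem_iUnion_of_mem h
    set N : Set W := D.Ui i ∩ p ⁻¹' D'.U with hN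
    have hNopen : IsOpen N := (D.hUiopen i).inter (D'.hUopen.preimage hp)
    -- continuous map on the subtype
    set g : N → Quot (coverRel p' A) :=
      fun v => q' (D'.sec i ⟨p (v : W), v.2.2⟩) with hg
    have hgcont : Continuous g := by
      have h1 : Continuous fun v : N => (⟨p (v : W), v.2.2⟩ : D'.U) :=
        (hp.comp continuous_subtype_val).subtype_mk _
      have h2 : Continuous fun v : N => (D'.e i).symm ⟨p (v : W), v.2.2⟩ :=
        (D'.e i).symm.continuous.comp h1
      exact continuous_quot_mk.comp h2.subtype_val
    have hfg : ∀ v : N, Quot.mk (coverRel p' A) (cmap hs' D D' (v : W)) = g v := by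
      intro v
      by_cases hv : p (v : W) ∈ A
      · rw [cmap_eq_of_mem hs' D D' hv i v.2.1]
      · refine Quot.sound (Or.inr ⟨?_, ?_⟩)
        · rw [p'_cmap hs' D D', D'.p_sec]
        · rw [p'_cmap hs' D D']; exact hv
    have hopen : IsOpen (Subtype.val '' (g ⁻¹' V)) :=
      hNopen.isOpenMap_subtype_val _ (hV.preimage hgcont)
    refine Filter.mem_of_superset (hopen.mem_nhds ?_) ?_
    · refine ⟨⟨w, hi, D'.hAU h⟩, ?_, rfl⟩
      show g _ ∈ V
      rw [← hfg ⟨w, hi, D'.hAU h⟩]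
      exact hw
    · rintro v ⟨u, hu, rfl⟩
      show Quot.mk (coverRel p' A) (cmap hs' D D' (u : W)) ∈ V
      rw [hfg u]
      exact hu
  · -- p w ∉ A
    set N : Set W := p ⁻¹' (Aᶜ ∩ p' '' (q' ⁻¹' V)) with hN
    have hNopen : IsOpen N := (hA.isOpen_compl.inter (hp'o _ hqV)).preimage hp
    refine Filter.mem_of_superset (hNopen.mem_nhds ?_) ?_
    · refine ⟨h, cmap hs' D D' w, hw, p'_cmap hs' D D' w⟩
    · rintro v ⟨hv, w'', hw'', hpw''⟩
      show Quot.mk (coverRel p' A) (cmap hs' D D' v) ∈ V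
      have : Quot.mk (coverRel p' A) (cmap hs' D D' v) = q' w'' := by
        refine Quot.sound (Or.inr ⟨?_, ?_⟩)
        · rw [p'_cmap hs' D D', hpw'']
        · rw [p'_cmap hs' D D']; exact hv
      rw [this]
      exact hw''

end TrivData

theorem stmt_17 {W W' M : Type*}
    [TopologicalSpace W] [TopologicalSpace W'] [TopologicalSpace M]
    (A : Set M) (hA : IsClosed A) (k : ℕ)
    (p : W → M) (p' : W' → M)
    (hp : IsCoveringMap p) (hp' : IsCoveringMap p')
    (hpsurj : Function.Surjective p) (hpsurj' : Function.Surjective p')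
    (U U' : Set M) (hUopen : IsOpen U) (hUopen' : IsOpen U')
    (hAU : A ⊆ U) (hAU' : A ⊆ U')
    (Ui : Fin k → Set W) (hUiopen : ∀ i, IsOpen (Ui i))
    (hUidisj : Pairwise (Function.onFun Disjoint Ui))
    (hUiunion : ⋃ i, Ui i = p ⁻¹' U)
    (hUihomeo : ∀ i, ∃ e : (Ui i) ≃ₜ U, ∀ w : Ui i, (e w : M) = p (w : W))
    (Ui' : Fin k → Set W') (hUiopen' : ∀ i, IsOpen (Ui' i))
    (hUidisj' : Pairwise (Function.onFun Disjoint Ui'))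
    (hUiunion' : ⋃ i, Ui' i = p' ⁻¹' U')
    (hUihomeo' : ∀ i, ∃ e : (Ui' i) ≃ₜ U', ∀ w : Ui' i, (e w : M) = p' (w : W')) :
    Nonempty (Quot (coverRel p A) ≃ₜ Quot (coverRel p' A)) := by
  let D : TrivData A k p :=
    ⟨U, hUopen, hAU, Ui, hUiopen, hUidisj, hUiunion,
      fun i => (hUihomeo i).choose, fun i => (hUihomeo i).choose_spec⟩
  let D' : TrivData A k p' :=
    ⟨U', hUopen', hAU', Ui', hUiopen', hUidisj', hUiunion',
      fun i => (hUihomeo' i).choose, fun i => (hUihomeo' i).choose_spec⟩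
  refine ⟨{
    toFun := Quot.lift (fun w => Quot.mk (coverRel p' A) (TrivData.cmap hpsurj' D D' w))
      (TrivData.cmap_quot_eq hpsurj' D D')
    invFun := Quot.lift (fun w => Quot.mk (coverRel p A) (TrivData.cmap hpsurj D' D w))
      (TrivData.cmap_quot_eq hpsurj D' D)
    left_inv := ?_
    right_inv := ?_
    continuous_toFun := continuous_quot_lift _
      (TrivData.continuous_quot_cmap hA (IsCoveringMap.continuous hp)
        (IsCoveringMap.continuous hp') (IsCoveringMap.isOpenMap hp') hpsurj' D D')
    continuous_invFun := continuous_quot_lift _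
      (TrivData.continuous_quot_cmap hA (IsCoveringMap.continuous hp')
        (IsCoveringMap.continuous hp) (IsCoveringMap.isOpenMap hp) hpsurj D' D) }⟩
  · refine Quot.ind fun w => ?_
    exact Quot.sound (TrivData.cmap_cmap hpsurj hpsurj' D D' w)
  · refine Quot.ind fun w => ?_
    exact Quot.sound (TrivData.cmap_cmap hpsurj' hpsurj D' D w)
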